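/- Let q0, q1 : ℝ → ℂ be infinitely differentiable and define the fifth-order differential expression P5 acting on infinitely differentiable ψ : ℝ → ℂ by (P5ψ)(x) = P2(L3ψ)(x) + (2/3) q0(x) ψ″(x) − ( (1/18) q1″(x) + (1/9) q1(x)² + (1/3) q0′(x) ) ψ′(x) + ( (1/9) q0″(x) + (1/18) q1‴(x) + (2/9) q1(x) q1′(x) + (4/9) q0(x) q1(x) ) ψ(x). Set F(x) = −(1/9) q1⁗(x) − (5/9) q1(x) q1″(x) − (5/27) q1(x)³ − (5/12) q1′(x)² + (5/3) q0(x)² and G(x) = −(1/9) q0⁗(x) − (5/9) q1(x)² q0(x) − (5/18) q0(x) q1″(x) − (5/9) q1(x) q0″(x) − (5/18) q0′(x) q1′(x). Then for every infinitely differentiable ψ : ℝ → ℂ and every x ∈ ℝ: P5(L3ψ)(x) − L3(P5ψ)(x) = F′(x) ψ′(x) + ( (1/2) F″(x) + G′(x) ) ψ(x). In particular, the commutator [P5, L3] is a differential expression of order one. -/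

import Mathlib

/-- The third-order Boussinesq Lax differential expression
`L₃ψ = ψ''' + q₁ ψ' + ((1/2) q₁' + q₀) ψ`. -/
noncomputable def L3 (q0 q1 ψ : ℝ → ℂ) : ℝ → ℂ :=
  fun x => iteratedDeriv 3 ψ x + q1 x * deriv ψ x
    + ((1 / 2 : ℂ) * deriv q1 x + q0 x) * ψ x

/-- The second-order differential expression `P₂ψ = ψ'' + (2/3) q₁ ψ`. -/
noncomputable def P2 (q1 ψ : ℝ → ℂ) : ℝ → ℂ :=
  fun x => iteratedDeriv 2 ψ x + (2 / 3 : ℂ) * q1 x * ψ x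

/-- The fifth-order differential expression `P₅` of the Boussinesq hierarchy. -/
noncomputable def P5 (q0 q1 ψ : ℝ → ℂ) : ℝ → ℂ :=
  fun x => P2 q1 (L3 q0 q1 ψ) x
    + (2 / 3 : ℂ) * q0 x * iteratedDeriv 2 ψ x
    - ((1 / 18 : ℂ) * iteratedDeriv 2 q1 x + (1 / 9 : ℂ) * (q1 x) ^ 2
        + (1 / 3 : ℂ) * deriv q0 x) * deriv ψ x
    + ((1 / 9 : ℂ) * iteratedDeriv 2 q0 x + (1 / 18 : ℂ) * iteratedDeriv 3 q1 x
        + (2 / 9 : ℂ) * q1 x * deriv q1 x + (4 / 9 : ℂ) * q0 x * q1 x) * ψ x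

theorem deriv_fun_add'' {f g : ℝ → ℂ} (hf : Differentiable ℝ f) (hg : Differentiable ℝ g) :
    deriv (fun x => f x + g x) = fun x => deriv f x + deriv g x := by
  funext x; exact deriv_add (hf x) (hg x)

theorem deriv_fun_sub'' {f g : ℝ → ℂ} (hf : Differentiable ℝ f) (hg : Differentiable ℝ g) :
    deriv (fun x => f x - g x) = fun x => deriv f x - deriv g x := by
  funext x; exact deriv_sub (hf x) (hg x)

theorem deriv_fun_mul'' {f g : ℝ → ℂ} (hf : Differentiable ℝ f) (hg : Differentiable ℝ g) :
    deriv (fun x => f x * g x) = fun x => deriv f x * g x + f x * deriv g x := by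
  funext x; exact deriv_mul (hf x) (hg x)

theorem deriv_fun_sq'' {f : ℝ → ℂ} (hf : Differentiable ℝ f) :
    deriv (fun x => f x ^ 2) = fun x => deriv f x * f x + f x * deriv f x := by
  rw [show (fun x => f x ^ 2) = fun x => f x * f x from funext fun x => sq (f x)]
  exact deriv_fun_mul'' hf hf

theorem deriv_fun_cube'' {f : ℝ → ℂ} (hf : Differentiable ℝ f) :
    deriv (fun x => f x ^ 3) = fun x => 3 * f x ^ 2 * deriv f x := by
  funext x
  have h2 := (((hf x).hasDerivAt.mul (hf x).hasDerivAt).mul (hf x).hasDerivAt)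
  have he : (fun y => f y ^ 3) = fun y => f y * f y * f y := funext fun y => by ring
  rw [he]
  rw [show (fun y => f y * f y * f y) = f * f * f from rfl, h2.deriv]
  simp only [Pi.mul_apply]; ring

theorem itd2 {f : ℝ → ℂ} : iteratedDeriv 2 f = deriv (deriv f) := by
  rw [show (2:ℕ) = 1 + 1 from rfl, iteratedDeriv_succ, iteratedDeriv_one]

theorem itd3 {f : ℝ → ℂ} : iteratedDeriv 3 f = deriv (deriv (deriv f)) := by
  rw [show (3:ℕ) = 2 + 1 from rfl, iteratedDeriv_succ, itd2]

theorem itd4 {f : ℝ → ℂ} : iteratedDeriv 4 f = deriv (deriv (deriv (deriv f))) := by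
  rw [show (4:ℕ) = 3 + 1 from rfl, iteratedDeriv_succ, itd3]

theorem smooth_deriv {f : ℝ → ℂ} (h : ContDiff ℝ (⊤ : ℕ∞) f) : ContDiff ℝ (⊤ : ℕ∞) (deriv f) :=
  (contDiff_infty_iff_deriv.mp h).2

set_option maxHeartbeats 4000000 in
/-- The commutator `[P₅, L₃]` is the first-order differential expression
`F' (d/dx) + ((1/2) F'' + G')`. -/
theorem commutator_P5_L3_order_one
    (q0 q1 : ℝ → ℂ) (hq0 : ContDiff ℝ (⊤ : ℕ∞) q0) (hq1 : ContDiff ℝ (⊤ : ℕ∞) q1)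
    (F G : ℝ → ℂ)
    (hF : ∀ x : ℝ, F x = -(1 / 9) * iteratedDeriv 4 q1 x
        - (5 / 9) * q1 x * iteratedDeriv 2 q1 x - (5 / 27) * (q1 x) ^ 3
        - (5 / 12) * (deriv q1 x) ^ 2 + (5 / 3) * (q0 x) ^ 2)
    (hG : ∀ x : ℝ, G x = -(1 / 9) * iteratedDeriv 4 q0 x
        - (5 / 9) * (q1 x) ^ 2 * q0 x - (5 / 18) * q0 x * iteratedDeriv 2 q1 x
        - (5 / 9) * q1 x * iteratedDeriv 2 q0 x
        - (5 / 18) * deriv q0 x * deriv q1 x) :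
    ∀ ψ : ℝ → ℂ, ContDiff ℝ (⊤ : ℕ∞) ψ → ∀ x : ℝ,
      P5 q0 q1 (L3 q0 q1 ψ) x - L3 q0 q1 (P5 q0 q1 ψ) x
        = deriv F x * deriv ψ x
          + ((1 / 2) * iteratedDeriv 2 F x + deriv G x) * ψ x := by
  intro ψ hψ x
  have hF' : F = fun x => -(1 / 9) * iteratedDeriv 4 q1 x
      - (5 / 9) * q1 x * iteratedDeriv 2 q1 x - (5 / 27) * (q1 x) ^ 3
      - (5 / 12) * (deriv q1 x) ^ 2 + (5 / 3) * (q0 x) ^ 2 := funext hF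
  have hG' : G = fun x => -(1 / 9) * iteratedDeriv 4 q0 x
      - (5 / 9) * (q1 x) ^ 2 * q0 x - (5 / 18) * q0 x * iteratedDeriv 2 q1 x
      - (5 / 9) * q1 x * iteratedDeriv 2 q0 x
      - (5 / 18) * deriv q0 x * deriv q1 x := funext hG
  subst hF' hG'
  have a0 : ContDiff ℝ (⊤ : ℕ∞) q0 := hq0.of_le (by simp)
  have b0 : ContDiff ℝ (⊤ : ℕ∞) q1 := hq1.of_le (by simp)
  have c0 : ContDiff ℝ (⊤ : ℕ∞) ψ := hψ.of_le (by simp)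
  have a1 := smooth_deriv a0; have a2 := smooth_deriv a1
  have a3 := smooth_deriv a2; have a4 := smooth_deriv a3
  have a5 := smooth_deriv a4; have a6 := smooth_deriv a5
  have a7 := smooth_deriv a6; have a8 := smooth_deriv a7
  have b1 := smooth_deriv b0; have b2 := smooth_deriv b1
  have b3 := smooth_deriv b2; have b4 := smooth_deriv b3
  have b5 := smooth_deriv b4; have b6 := smooth_deriv b5
  have b7 := smooth_deriv b6; have b8 := smooth_deriv b7
  have c1 := smooth_deriv c0; have c2 := smooth_deriv c1
  have c3 := smooth_deriv c2; have c4 := smooth_deriv c3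
  have c5 := smooth_deriv c4; have c6 := smooth_deriv c5
  have c7 := smooth_deriv c6; have c8 := smooth_deriv c7
  have A0 := a0.differentiable (by simp); have A1 := a1.differentiable (by simp)
  have A2 := a2.differentiable (by simp); have A3 := a3.differentiable (by simp)
  have A4 := a4.differentiable (by simp); have A5 := a5.differentiable (by simp)
  have A6 := a6.differentiable (by simp); have A7 := a7.differentiable (by simp)
  have A8 := a8.differentiable (by simp)
  have B0 := b0.differentiable (by simp); have B1 := b1.differentiable (by simp)
  have B2 := b2.differentiable (by simp); have B3 := b3.differentiable (by simp)
  have B4 := b4.differentiable (by simp); have B5 := b5.differentiable (by simp)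
  have B6 := b6.differentiable (by simp); have B7 := b7.differentiable (by simp)
  have B8 := b8.differentiable (by simp)
  have C0 := c0.differentiable (by simp); have C1 := c1.differentiable (by simp)
  have C2 := c2.differentiable (by simp); have C3 := c3.differentiable (by simp)
  have C4 := c4.differentiable (by simp); have C5 := c5.differentiable (by simp)
  have C6 := c6.differentiable (by simp); have C7 := c7.differentiable (by simp)
  have C8 := c8.differentiable (by simp)
  have eL3 : ∀ f : ℝ → ℂ, L3 q0 q1 f = fun x => iteratedDeriv 3 f x + q1 x * deriv f x
      + ((1 / 2 : ℂ) * deriv q1 x + q0 x) * f x := fun f => rfl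
  have eP2 : ∀ f : ℝ → ℂ, P2 q1 f = fun x => iteratedDeriv 2 f x + (2 / 3 : ℂ) * q1 x * f x :=
    fun f => rfl
  have eP5 : ∀ f : ℝ → ℂ, P5 q0 q1 f = fun x => P2 q1 (L3 q0 q1 f) x
      + (2 / 3 : ℂ) * q0 x * iteratedDeriv 2 f x
      - ((1 / 18 : ℂ) * iteratedDeriv 2 q1 x + (1 / 9 : ℂ) * (q1 x) ^ 2
          + (1 / 3 : ℂ) * deriv q0 x) * deriv f x
      + ((1 / 9 : ℂ) * iteratedDeriv 2 q0 x + (1 / 18 : ℂ) * iteratedDeriv 3 q1 x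
          + (2 / 9 : ℂ) * q1 x * deriv q1 x + (4 / 9 : ℂ) * q0 x * q1 x) * f x := fun f => rfl
  simp only [eP5, eP2, eL3, itd2, itd3, itd4]
  simp (disch := fun_prop) only [deriv_fun_add'', deriv_fun_sub'', deriv_fun_mul'',
    deriv_fun_sq'', deriv_fun_cube'', deriv_const']
  ring
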